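/- arXiv:1207.6481 — 2 statements merged into one kernel-verified Lean document; each statement's English description precedes it below -/
import Mathlib

section
/- Let f_k, p_k, q_k ∈ ℚ[s,t] be defined by the formal power series expansions log(1+tx+sx²) = ∑_{k≥1} f_k x^k, 1/(1+tx+sx²) = ∑_{k≥0} p_k x^k, and -1/(1+tx+sx²)² = ∑_{k≥0} q_k x^k. Then for every k ≥ 1, -(4s - t²)·q_{k-1} + t·p_k = (k+1)²·f_{k+1}. -/
noncomputable section

/-- The polynomial ring ℚ[s,t]. -/
abbrev Rst : Type := MvPolynomial (Fin 2) ℚ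

def s : Rst := MvPolynomial.X 0
def t : Rst := MvPolynomial.X 1

/-- `log(1+v) = ∑_{m≥1} (-1)^{m+1} v^m / m` for `v` with zero constant term. -/
def logOne (v : PowerSeries Rst) : PowerSeries Rst :=
  PowerSeries.mk fun k => ∑ m ∈ Finset.range (k + 1),
    MvPolynomial.C ((-1 : ℚ) ^ (m + 1) / (m : ℚ)) * PowerSeries.coeff k (v ^ m)

/-- `1 + t·x + s·x²` in `ℚ[s,t][[x]]`. -/
def Q : PowerSeries Rst :=
  1 + PowerSeries.C t * PowerSeries.X + PowerSeries.C s * PowerSeries.X ^ 2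

/-!
Mathlib's `log(1+X)` has derivative `1/(1+X)`, so by the chain rule for substitution
`L = log Q = logOne (Q - 1)` satisfies `L' = Q' P` with `P = 1/Q`. The operator `f ↦ (X f')'`
multiplies the `(k+1)`-st coefficient of `f` by `(k+1)²` and moves it to degree `k`. For quadratic
`Q = 1 + t X + s X²` one has `P' = -Q' P²`, `Q'' = 2s` and `Q'² - 4 s Q = t² - 4s`, whence
`(X Q' P)' = t P - (t² - 4s) X P²`, and `N = -P²`.
-/

namespace PowerSeries

theorem one_add_X_mul_derivative_log (A : Type*) [CommRing A] [Algebra ℚ A] :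
    (1 + X) * d⁄dX A (log A) = 1 := by
  ext (_ | n)
  · simp [deriv_log]
  · rw [add_mul, one_mul, map_add, coeff_succ_X_mul, deriv_log, coeff_mk, coeff_mk, coeff_one,
      if_neg n.succ_ne_zero, ← map_add, pow_succ, mul_neg_one, neg_add_cancel, map_zero]

theorem one_add_mul_derivative_subst_log {A : Type*} [CommRing A] [Algebra ℚ A] {v : A⟦X⟧}
    (hv : constantCoeff v = 0) :
    (1 + v) * d⁄dX A ((log A).subst v) = d⁄dX A v := by
  have hsubst : HasSubst v := HasSubst.of_constantCoeff_zero' hv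
  have hinv := congrArg (substAlgHom hsubst) (one_add_X_mul_derivative_log A)
  rw [map_mul, map_add, map_one, substAlgHom_X, coe_substAlgHom] at hinv
  rw [derivative_subst hsubst, ← mul_assoc, hinv, one_mul]

theorem coeff_derivative_X_mul_derivative {R : Type*} [CommSemiring R] (f : R⟦X⟧) (n : ℕ) :
    coeff n (d⁄dX R (X * d⁄dX R f)) = ((n + 1 : ℕ) : R) ^ 2 * coeff (n + 1) f := by
  rw [coeff_derivative, coeff_succ_X_mul, coeff_derivative]
  push_cast
  ring

theorem derivative_X_mul_derivative_mul_of_quadratic_mul_eq_one {R : Type*} [CommRing R]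
    (a b : R) {P : R⟦X⟧} (hP : (1 + C a * X + C b * X ^ 2) * P = 1) :
    d⁄dX R (X * (d⁄dX R (1 + C a * X + C b * X ^ 2) * P))
      = C a * P - C (a ^ 2 - 4 * b) * (X * P ^ 2) := by
  have hdP : d⁄dX R P = -P ^ 2 * d⁄dX R (1 + C a * X + C b * X ^ 2) :=
    @derivative_invOf R _ _ (invertibleOfRightInverse _ P hP)
  have hdQ : d⁄dX R (1 + C a * X + C b * X ^ 2) = C a + C (2 * b) * X := by
    simp only [map_add, derivative_one, Derivation.leibniz, Derivation.leibniz_pow, derivative_C,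
      derivative_X, smul_eq_mul, map_mul, map_ofNat]
    ring
  have hddQ : d⁄dX R (C a + C (2 * b) * X) = C (2 * b) := by simp
  rw [Derivation.leibniz, Derivation.leibniz, hdP, hdQ, hddQ, derivative_X]
  simp only [smul_eq_mul, map_sub, map_mul, map_pow, map_ofNat]
  linear_combination (-4 * C b * X * P) * hP

end PowerSeries

open PowerSeries

theorem logOne_eq_subst_log {v : Rst⟦X⟧} (hv : constantCoeff v = 0) :
    logOne v = (log Rst).subst v := by
  ext k : 1
  rw [logOne, coeff_mk, coeff_subst' (HasSubst.of_constantCoeff_zero' hv),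
    finsum_eq_sum_of_support_subset (s := Finset.range (k + 1))]
  · refine Finset.sum_congr rfl fun m _ => ?_
    -- the `m = 0` term of `logOne` is `C ((-1) / 0) = 0`, like the constant term of `log`
    rcases m with _ | m
    · simp
    · simp [MvPolynomial.algebraMap_eq, smul_eq_mul]
  · intro m hm
    by_contra hmk
    refine hm (smul_eq_zero_of_right _ (coeff_of_lt_order k ?_))
    exact (Nat.cast_lt.mpr (by simpa using hmk)).trans_le
      (le_order_pow_of_constantCoeff_eq_zero m hv)

theorem derivative_logOne_eq_mul {v P : Rst⟦X⟧} (hv : constantCoeff v = 0)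
    (hP : (1 + v) * P = 1) :
    d⁄dX Rst (logOne v) = d⁄dX Rst v * P := by
  rw [logOne_eq_subst_log hv]
  linear_combination P * one_add_mul_derivative_subst_log hv - d⁄dX Rst ((log Rst).subst v) * hP

/-- With `f_k`, `p_k`, `q_k` defined by `log(1+tx+sx²) = ∑ f_k x^k`,
`1/(1+tx+sx²) = ∑ p_k x^k` and `-1/(1+tx+sx²)² = ∑ q_k x^k`, one has
`-(4s-t²)·q_{k-1} + t·p_k = (k+1)²·f_{k+1}` for every `k ≥ 1`. -/
theorem key_relation (P N : PowerSeries Rst) (hP : Q * P = 1) (hN : Q ^ 2 * N = -1)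
    (k : ℕ) (hk : 1 ≤ k) :
    -(4 * s - t ^ 2) * PowerSeries.coeff (k - 1) N
        + t * PowerSeries.coeff k P
      = ((k + 1 : ℕ) : Rst) ^ 2 *
          PowerSeries.coeff (k + 1)
            (logOne (PowerSeries.C t * PowerSeries.X
              + PowerSeries.C s * PowerSeries.X ^ 2)) := by
  have hQ : Q = 1 + (C t * X + C s * X ^ 2) := by rw [Q, add_assoc]
  have hN : N = -P ^ 2 := by linear_combination (-(N * (1 + Q * P))) * hP + P ^ 2 * hN
  have hdlog : d⁄dX Rst (logOne (C t * X + C s * X ^ 2)) = d⁄dX Rst Q * P := by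
    rw [hQ, map_add, derivative_one, zero_add]
    exact derivative_logOne_eq_mul (by simp) (hQ ▸ hP)
  obtain ⟨j, rfl⟩ : ∃ j, k = j + 1 := ⟨k - 1, by omega⟩
  rw [← coeff_derivative_X_mul_derivative, hdlog, Q,
    derivative_X_mul_derivative_mul_of_quadratic_mul_eq_one t s hP, hN, map_sub, coeff_C_mul,
    coeff_C_mul, coeff_succ_X_mul, Nat.add_sub_cancel, map_neg]
  ring
end
end

section
/- Let f_k and p_k ∈ ℚ[s,t] be defined by log(1+tx+sx²) = ∑_{k≥1} f_k x^k and 1/(1+tx+sx²) = ∑_{k≥0} p_k x^k as formal power series. Then for every n ≥ 0, (4s - t²)·p_n = 2(n+2)·f_{n+2} + (n+1)·t·f_{n+1}. -/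
noncomputable section

/-!
Differentiating `L = log(1+v)` gives `(1+v)·L' = v'`; this is checked coefficientwise against the
partial sums `∑_{m≤N} (-1)^{m+1} v^m/m`, whose derivatives are `(∑_{i<N} (-v)^i)·v'`, a truncated
geometric series. For `v = tx + sx²` and `P = 1/(1+v)` this gives `L' = P·(t + 2sx)`, and the
relation is the coefficient of `x^{n+1}` in `(2 + tx)·L' = 2t + (4s - t²)·x·P`, which holds because
`(2 + tx)(t + 2sx) = 2t(1 + tx + sx²) + (4s - t²)x`.
-/

open PowerSeries Finset

section General

variable {R : Type*} [CommSemiring R]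

theorem PowerSeries.X_pow_dvd_pow_of_constantCoeff_eq_zero {v : R⟦X⟧} (hv : constantCoeff v = 0)
    (m : ℕ) : X ^ m ∣ v ^ m :=
  pow_dvd_pow_of_dvd (X_dvd_iff.mpr hv) m

theorem PowerSeries.X_pow_dvd_derivative {f : R⟦X⟧} {N : ℕ} (h : X ^ (N + 1) ∣ f) :
    X ^ N ∣ d⁄dX R f := by
  rw [X_pow_dvd_iff] at h ⊢
  intro m hm
  rw [coeff_derivative, h (m + 1) (by omega), zero_mul]

end General

def logPartial (v : PowerSeries Rst) (N : ℕ) : PowerSeries Rst :=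
  ∑ m ∈ range (N + 1), C (MvPolynomial.C ((-1 : ℚ) ^ (m + 1) / (m : ℚ))) * v ^ m

theorem X_pow_dvd_logOne_sub_logPartial {v : PowerSeries Rst} (hv : constantCoeff v = 0)
    (N : ℕ) : X ^ (N + 1) ∣ logOne v - logPartial v N := by
  rw [X_pow_dvd_iff]
  intro k hk
  rw [map_sub, sub_eq_zero, logOne, coeff_mk, logPartial, map_sum]
  simp_rw [coeff_C_mul]
  refine sum_subset (range_subset_range.mpr (by omega)) fun m _ hm => ?_
  have hkm : k < m := by simpa using hm
  rw [X_pow_dvd_iff.mp (X_pow_dvd_pow_of_constantCoeff_eq_zero hv m) k hkm, mul_zero]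

theorem derivative_logPartial (v : PowerSeries Rst) (N : ℕ) :
    d⁄dX Rst (logPartial v N) = (∑ i ∈ range N, (-v) ^ i) * d⁄dX Rst v := by
  rw [logPartial, map_sum, sum_range_succ', sum_mul]
  simp only [pow_zero, mul_one, derivative_C, add_zero]
  refine sum_congr rfl fun i _ => ?_
  set c := MvPolynomial.C ((-1 : ℚ) ^ (i + 1 + 1) / ((i + 1 : ℕ) : ℚ))
  have hc : c * ((i + 1 : ℕ) : Rst) = (-1) ^ i := by
    rw [← map_natCast MvPolynomial.C, ← map_mul, div_mul_cancel₀ _ (by positivity), pow_add,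
      pow_add]
    simp
  have hc' : (-1 : Rst⟦X⟧) ^ i = C c * ((i + 1 : ℕ) : Rst⟦X⟧) := by
    rw [← map_natCast C, ← map_mul, hc]; simp
  rw [Derivation.leibniz, Derivation.leibniz_pow, derivative_C, smul_zero, add_zero,
    Nat.add_sub_cancel, neg_pow v, hc']
  simp only [smul_eq_mul, nsmul_eq_mul]
  ring

theorem one_add_mul_derivative_logOne {v : PowerSeries Rst} (hv : constantCoeff v = 0) :
    (1 + v) * d⁄dX Rst (logOne v) = d⁄dX Rst v := by
  refine PowerSeries.ext fun n => ?_
  rw [← sub_eq_zero, ← map_sub]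
  suffices X ^ (n + 1) ∣ (1 + v) * d⁄dX Rst (logOne v) - d⁄dX Rst v from
    X_pow_dvd_iff.mp this n n.lt_succ_self
  have hgeom : (1 + v) * ∑ i ∈ range (n + 1), (-v) ^ i = 1 - (-v) ^ (n + 1) := by
    linear_combination -geom_sum_mul (-v) (n + 1)
  have hsplit : (1 + v) * d⁄dX Rst (logOne v) - d⁄dX Rst v
      = (1 + v) * d⁄dX Rst (logOne v - logPartial v (n + 1)) - (-v) ^ (n + 1) * d⁄dX Rst v := by
    rw [map_sub, derivative_logPartial]
    linear_combination d⁄dX Rst v * hgeom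
  rw [hsplit]
  refine dvd_sub (dvd_mul_of_dvd_right ?_ _) (dvd_mul_of_dvd_left ?_ _)
  · exact X_pow_dvd_derivative (X_pow_dvd_logOne_sub_logPartial hv (n + 1))
  · rw [neg_pow]
    exact dvd_mul_of_dvd_right (X_pow_dvd_pow_of_constantCoeff_eq_zero hv _) _

/-- With `f_k` and `p_k` defined by `log(1+tx+sx²) = ∑_{k≥1} f_k x^k` and
`1/(1+tx+sx²) = ∑_{k≥0} p_k x^k`, one has
`(4s - t²)·p_n = 2(n+2)·f_{n+2} + (n+1)·t·f_{n+1}` for every `n ≥ 0`. -/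
theorem u_pn_relation (P : PowerSeries Rst) (hP : Q * P = 1) (n : ℕ) :
    (4 * s - t ^ 2) * PowerSeries.coeff n P
      = 2 * ((n + 2 : ℕ) : Rst) *
          PowerSeries.coeff (n + 2)
            (logOne (PowerSeries.C t * PowerSeries.X
              + PowerSeries.C s * PowerSeries.X ^ 2))
        + ((n + 1 : ℕ) : Rst) * t *
          PowerSeries.coeff (n + 1)
            (logOne (PowerSeries.C t * PowerSeries.X
              + PowerSeries.C s * PowerSeries.X ^ 2)) := by
  set v : PowerSeries Rst := C t * X + C s * X ^ 2
  have hQ : Q = 1 + v := by rw [Q]; ring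
  have hv' : d⁄dX Rst v = C t + C 2 * C s * X := by
    simp only [v, map_add, Derivation.leibniz, Derivation.leibniz_pow, derivative_C,
      derivative_X, smul_eq_mul, nsmul_eq_mul, map_ofNat]
    push_cast
    ring
  rw [hQ] at hP
  have hL : d⁄dX Rst (logOne v) = P * d⁄dX Rst v := by
    rw [← one_add_mul_derivative_logOne (v := v) (by simp [v])]
    linear_combination -d⁄dX Rst (logOne v) * hP
  have key : C 2 * d⁄dX Rst (logOne v) + X * (C t * d⁄dX Rst (logOne v))
      = C (2 * t) + X * (C (4 * s - t ^ 2) * P) := by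
    simp only [hL, hv', map_mul, map_sub, map_pow, map_ofNat]
    linear_combination (2 * C t) * hP
  have hcoeff := congrArg (coeff (n + 1)) key
  rw [map_add, map_add, coeff_C_mul, coeff_succ_X_mul, coeff_C_mul, coeff_C, if_neg n.succ_ne_zero,
    coeff_succ_X_mul, coeff_C_mul, coeff_derivative, coeff_derivative] at hcoeff
  push_cast at hcoeff ⊢
  linear_combination -hcoeff
end
end
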